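/- Every λ'-set in a perfect Polish space X is countably perfectly meager in X. -/

import Mathlib

open Set

/-- An `Fσ` set: a countable union of closed sets. -/
def IsFsigma {X : Type*} [TopologicalSpace X] (F : Set X) : Prop :=
  ∃ s : ℕ → Set X, (∀ n, IsClosed (s n)) ∧ F = ⋃ n, s n

/-- A perfect set in the classical sense: nonempty, closed, without isolated points. -/
def PerfectSet {X : Type*} [TopologicalSpace X] (P : Set X) : Prop :=
  Perfect P ∧ P.Nonempty

/-- A Cantor set: a subset homeomorphic to the Cantor space `2^ℕ`
(hence nonempty and compact). -/
def IsCantorSet {X : Type*} [TopologicalSpace X] (K : Set X) : Prop :=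
  Nonempty ((ℕ → Bool) ≃ₜ K)

/-- `F` is meager relative to the subspace `P`. -/
def MeagerIn {X : Type*} [TopologicalSpace X] (F P : Set X) : Prop :=
  IsMeagre ((↑) ⁻¹' F : Set P)

/-- `A` is countably perfectly meager in `X`. -/
def CPM {X : Type*} [TopologicalSpace X] (A : Set X) : Prop :=
  ∀ P : ℕ → Set X, (∀ n, PerfectSet (P n)) →
    ∃ F : Set X, IsFsigma F ∧ A ⊆ F ∧ ∀ n, MeagerIn F (P n)

/-- `A` is a `λ'`-set in `X`: every countable `D ⊆ X` is a relative `Gδ`-set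
in the subspace `A ∪ D`. -/
def IsLambdaPrimeSet {X : Type*} [TopologicalSpace X] (A : Set X) : Prop :=
  ∀ D : Set X, D.Countable → ∃ G : Set X, IsGδ G ∧ (A ∪ D) ∩ G = D

/-! Given perfect sets `P n`, pick a countable `D` meeting each `P n` in a relatively dense set.
The λ'-property gives a `Gδ` set `G` with `(A ∪ D) ∩ G = D`, so `A ⊆ Gᶜ ∪ D`, which is `Fσ`.
In each `P n`, `G` is a dense `Gδ`, so `Gᶜ` is meagre there, and the countable set `D` is meagre
because `P n` has no isolated points. -/

lemma IsGδ.isFsigma_compl {X : Type*} [TopologicalSpace X] {G : Set X} (hG : IsGδ G) :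
    IsFsigma Gᶜ := by
  obtain ⟨U, hUo, rfl⟩ := hG.eq_iInter_nat
  exact ⟨fun n => (U n)ᶜ, fun n => (hUo n).isClosed_compl, compl_iInter U⟩

lemma IsGδ.isMeagre_compl_of_dense {X : Type*} [TopologicalSpace X] {G : Set X} (hG : IsGδ G)
    (hd : Dense G) : IsMeagre Gᶜ := by
  rw [IsMeagre, compl_compl]
  exact residual_of_dense_Gδ hG hd

lemma Preperfect.perfectSpace_subtype {X : Type*} [TopologicalSpace X] {P : Set X}
    (hP : Preperfect P) : PerfectSpace P := by
  refine ⟨fun x _ => accPt_iff_nhds.2 fun U hU => ?_⟩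
  obtain ⟨V, hV, hVU⟩ := (mem_nhds_subtype P x U).1 hU
  obtain ⟨y, ⟨hyV, hyP⟩, hyx⟩ := preperfect_iff_nhds.1 hP x x.2 V hV
  exact ⟨⟨y, hyP⟩, ⟨hVU hyV, mem_univ _⟩, fun h => hyx (congrArg Subtype.val h)⟩

lemma isNowhereDense_singleton {X : Type*} [TopologicalSpace X] [T1Space X] [PerfectSpace X]
    (x : X) : IsNowhereDense {x} := by
  rw [isClosed_singleton.isNowhereDense_iff, interior_singleton]

lemma Set.Countable.isMeagre {X : Type*} [TopologicalSpace X] [T1Space X] [PerfectSpace X]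
    {s : Set X} (hs : s.Countable) : IsMeagre s := by
  rw [← biUnion_of_singleton s]
  exact isMeagre_biUnion hs fun x _ => (isNowhereDense_singleton x).isMeagre

theorem stmt8_general {X : Type*} [TopologicalSpace X] [PolishSpace X]
    (A : Set X) (hA : IsLambdaPrimeSet A) :
    CPM A := by
  intro P hP
  choose t htc htd using fun n => TopologicalSpace.exists_countable_dense (P n)
  set D : Set X := ⋃ n, (↑) '' t n
  have hDc : D.Countable := countable_iUnion fun n => (htc n).image _
  obtain ⟨G, hG, hGD⟩ := hA D hDc
  have hDG : D ⊆ G := fun x hx => (hGD.symm ▸ hx : x ∈ (A ∪ D) ∩ G).2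
  refine ⟨Gᶜ ∪ D, ?_, fun x hx => ?_, fun n => ?_⟩
  · simpa [compl_inter] using (hG.inter hDc.isGδ_compl).isFsigma_compl
  · by_cases hxG : x ∈ G
    · exact Or.inr (hGD ▸ ⟨Or.inl hx, hxG⟩)
    · exact Or.inl hxG
  · have := (hP n).1.2.perfectSpace_subtype
    have hGdense : Dense ((↑) ⁻¹' G : Set (P n)) :=
      (htd n).mono fun y hy => hDG (mem_iUnion.2 ⟨n, mem_image_of_mem _ hy⟩)
    rw [MeagerIn, preimage_union]
    exact (hG.preimage continuous_subtype_val).isMeagre_compl_of_dense hGdense |>.union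
      (hDc.preimage Subtype.val_injective).isMeagre

theorem stmt8 {X : Type*} [TopologicalSpace X] [PolishSpace X]
    (hX : Perfect (Set.univ : Set X)) (A : Set X) (hA : IsLambdaPrimeSet A) :
    CPM A :=
  stmt8_general A hA
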